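/- Given a nonzero vector n in a three-dimensional real vector space with rotation group D, the set of vectors perpendicular to n is a two-dimensional linear subspace (a plane), and there exists exactly one rotation r_n ∈ D with r_n n = n and r_n u = -u for all u ⊥ n. -/

import Mathlib

/-!
Pick `e` independent of `n` and let `r ∈ D` send the flag `(ℝ≥0 n, ℝ n + ℝ≥0 e)` to
`(ℝ≥0 n, ℝ n + ℝ≥0 (-e))`. Then `r²` preserves the first flag, so `r² = 1` by uniqueness, and
comparing coefficients gives `r n = n`, `r e = a n - e`: `r` is a half-turn about `n`, fixing
`n` and reversing `e - (a/2) n`.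
An element of `D` fixing two independent vectors fixes a flag, hence is the identity; so a
half-turn `s` about `n` fixes only the axis, and `x + s x ∈ ℝ n` for every `x`. Consequently
every half-turn about `n` maps each flag `(n, e)` to `(n, -e)`, so it is unique, and
`V = ℝ n ⊕ ker (r + 1)`, where `ker (r + 1)` is exactly the set of vectors perpendicular to `n`.
-/

/-- The ray (half-line) spanned by `v`: all nonnegative multiples of `v`. -/
def Ray' {V : Type*} [AddCommGroup V] [Module ℝ V] (v : V) : Set V :=
  {x | ∃ c : ℝ, 0 ≤ c ∧ x = c • v}

/-- The half-plane `ℝ v + ℝ≥0 w`. -/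
def HalfPlane {V : Type*} [AddCommGroup V] [Module ℝ V] (v w : V) : Set V :=
  {x | ∃ a b : ℝ, 0 ≤ b ∧ x = a • v + b • w}

/-- `D` is a rotation group: for any two pairs of (half-plane, ray on its boundary)
there is exactly one element of `D` mapping the first pair to the second. -/
def IsRotationGroup {V : Type*} [AddCommGroup V] [Module ℝ V]
    (D : Subgroup (V ≃ₗ[ℝ] V)) : Prop :=
  ∀ v w v' w' : V, LinearIndependent ℝ ![v, w] → LinearIndependent ℝ ![v', w'] →
    ∃! d : V ≃ₗ[ℝ] V, d ∈ D ∧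
      (d : V ≃ₗ[ℝ] V) '' HalfPlane v w = HalfPlane v' w' ∧
      (d : V ≃ₗ[ℝ] V) '' Ray' v = Ray' v'

/-- `w ⊥ v` : some rotation sends `w` to `-w` and fixes `v`. -/
def Perp {V : Type*} [AddCommGroup V] [Module ℝ V]
    (D : Subgroup (V ≃ₗ[ℝ] V)) (w v : V) : Prop :=
  ∃ r ∈ D, r w = -w ∧ r v = v

section

variable {V : Type*} [AddCommGroup V] [Module ℝ V]

lemma mem_ray_self (v : V) : v ∈ Ray' v :=
  ⟨1, zero_le_one, (one_smul ℝ v).symm⟩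

lemma right_mem_halfPlane (v w : V) : w ∈ HalfPlane v w :=
  ⟨0, 1, zero_le_one, by module⟩

lemma LinearEquiv.image_ray (d : V ≃ₗ[ℝ] V) (v : V) : d '' Ray' v = Ray' (d v) := by
  ext x
  constructor
  · rintro ⟨y, ⟨c, hc, rfl⟩, rfl⟩
    exact ⟨c, hc, by simp⟩
  · rintro ⟨c, hc, rfl⟩
    exact ⟨c • v, ⟨c, hc, rfl⟩, by simp⟩

lemma LinearEquiv.image_halfPlane (d : V ≃ₗ[ℝ] V) (v w : V) :
    d '' HalfPlane v w = HalfPlane (d v) (d w) := by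
  ext x
  constructor
  · rintro ⟨y, ⟨a, b, hb, rfl⟩, rfl⟩
    exact ⟨a, b, hb, by simp⟩
  · rintro ⟨a, b, hb, rfl⟩
    exact ⟨a • v + b • w, ⟨a, b, hb, rfl⟩, by simp⟩

lemma halfPlane_smul_add_smul (v w : V) {a b c : ℝ} (hc : c ≠ 0) (hb : 0 < b) :
    HalfPlane (c • v) (a • v + b • w) = HalfPlane v w := by
  ext x
  constructor
  · rintro ⟨p, q, hq, rfl⟩
    exact ⟨p * c + q * a, q * b, by positivity, by module⟩
  · rintro ⟨p, q, hq, rfl⟩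
    refine ⟨(p - q * a / b) / c, q / b, by positivity, ?_⟩
    match_scalars
    · field_simp; ring
    · field_simp

lemma eq_zero_of_self_eq_neg {u : V} (h : u = -u) : u = 0 := by
  have h2 : (2 : ℝ) • u = 0 := by rw [two_smul]; nth_rewrite 2 [h]; exact add_neg_cancel u
  simpa using h2

lemma LinearEquiv.mem_ker_add_id_iff (s : V ≃ₗ[ℝ] V) {x : V} :
    x ∈ LinearMap.ker (s.toLinearMap + LinearMap.id) ↔ s x = -x := by
  simp [add_eq_zero_iff_eq_neg]

lemma linearIndependent_pair_iff_notMem_span {n x : V} (hn : n ≠ 0) :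
    LinearIndependent ℝ ![n, x] ↔ x ∉ Submodule.span ℝ {n} := by
  simp [LinearIndependent.pair_iff' hn, Submodule.mem_span_singleton]

structure IsHalfTurn (D : Subgroup (V ≃ₗ[ℝ] V)) (n : V) (s : V ≃ₗ[ℝ] V) : Prop where
  mem : s ∈ D
  apply_axis : s n = n
  exists_apply_eq_neg : ∃ u, LinearIndependent ℝ ![n, u] ∧ s u = -u

namespace IsRotationGroup

variable {D : Subgroup (V ≃ₗ[ℝ] V)}

theorem eq_one_of_halfPlane_eq (hD : IsRotationGroup D) {s : V ≃ₗ[ℝ] V} (hs : s ∈ D) {v w : V}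
    (hvw : LinearIndependent ℝ ![v, w]) (hH : HalfPlane (s v) (s w) = HalfPlane v w)
    (hR : Ray' (s v) = Ray' v) : s = 1 :=
  (hD v w v w hvw hvw).unique
    ⟨hs, by rw [s.image_halfPlane, hH], by rw [s.image_ray, hR]⟩
    ⟨D.one_mem, by simp, by simp⟩

theorem eq_one_of_apply_eq_self (hD : IsRotationGroup D) {s : V ≃ₗ[ℝ] V} (hs : s ∈ D) {v w : V}
    (hvw : LinearIndependent ℝ ![v, w]) (hv : s v = v) (hw : s w = w) : s = 1 :=
  hD.eq_one_of_halfPlane_eq hs hvw (by rw [hv, hw]) (by rw [hv])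

end IsRotationGroup

namespace IsHalfTurn

variable {D : Subgroup (V ≃ₗ[ℝ] V)} {n : V} {s : V ≃ₗ[ℝ] V}

theorem axis_ne_zero (hs : IsHalfTurn D n s) : n ≠ 0 :=
  hs.exists_apply_eq_neg.choose_spec.1.ne_zero 0

theorem apply_apply (hD : IsRotationGroup D) (hs : IsHalfTurn D n s) (x : V) : s (s x) = x := by
  obtain ⟨u, hu, hsu⟩ := hs.exists_apply_eq_neg
  have hss : s * s = 1 := hD.eq_one_of_apply_eq_self (D.mul_mem hs.mem hs.mem) hu
    (by simp [hs.apply_axis]) (by simp [hsu])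
  exact LinearEquiv.congr_fun hss x

theorem add_apply_mem_span (hD : IsRotationGroup D) (hs : IsHalfTurn D n s) (x : V) :
    x + s x ∈ Submodule.span ℝ {n} := by
  by_contra hx
  have hs1 := hD.eq_one_of_apply_eq_self hs.mem
    ((linearIndependent_pair_iff_notMem_span hs.axis_ne_zero).2 hx) hs.apply_axis
    (by rw [map_add, hs.apply_apply hD, add_comm])
  subst hs1
  obtain ⟨u, hu, hsu⟩ := hs.exists_apply_eq_neg
  exact hu.ne_zero 1 (eq_zero_of_self_eq_neg hsu)

theorem image_halfPlane (hD : IsRotationGroup D) (hs : IsHalfTurn D n s) (e : V) :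
    s '' HalfPlane n e = HalfPlane n (-e) := by
  obtain ⟨t, ht⟩ := Submodule.mem_span_singleton.1 (hs.add_apply_mem_span hD e)
  have hse : s e = t • n + (1 : ℝ) • -e := by rw [ht]; module
  rw [s.image_halfPlane, hs.apply_axis, hse]
  simpa using halfPlane_smul_add_smul n (-e) (a := t) one_ne_zero one_pos

theorem unique (hD : IsRotationGroup D) {r : V ≃ₗ[ℝ] V} (hs : IsHalfTurn D n s)
    (hr : IsHalfTurn D n r) : s = r := by
  obtain ⟨u, hu, -⟩ := hs.exists_apply_eq_neg
  exact (hD n u n (-u) hu (by simpa)).unique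
    ⟨hs.mem, hs.image_halfPlane hD u, by rw [s.image_ray, hs.apply_axis]⟩
    ⟨hr.mem, hr.image_halfPlane hD u, by rw [r.image_ray, hr.apply_axis]⟩

theorem perp_iff (hD : IsRotationGroup D) (hs : IsHalfTurn D n s) {u : V} :
    Perp D u n ↔ s u = -u := by
  refine ⟨fun ⟨r, hr, hru, hrn⟩ ↦ ?_, fun hsu ↦ ⟨s, hs.mem, hsu, hs.apply_axis⟩⟩
  by_cases hun : u ∈ Submodule.span ℝ {n}
  · obtain ⟨t, rfl⟩ := Submodule.mem_span_singleton.1 hun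
    rw [map_smul, hrn] at hru
    simp [eq_zero_of_self_eq_neg hru]
  · have hnu := (linearIndependent_pair_iff_notMem_span hs.axis_ne_zero).2 hun
    rwa [IsHalfTurn.unique hD ⟨hr, hrn, u, hnu, hru⟩ hs] at hru

theorem isCompl_span_ker (hD : IsRotationGroup D) (hs : IsHalfTurn D n s) :
    IsCompl (Submodule.span ℝ {n}) (LinearMap.ker (s.toLinearMap + LinearMap.id)) := by
  constructor
  · rw [Submodule.disjoint_def]
    rintro x hx hsx
    obtain ⟨t, rfl⟩ := Submodule.mem_span_singleton.1 hx
    rw [s.mem_ker_add_id_iff, map_smul, hs.apply_axis] at hsx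
    exact eq_zero_of_self_eq_neg hsx
  · rw [codisjoint_iff, Submodule.eq_top_iff']
    intro x
    have hx : x = (1 / 2 : ℝ) • (x + s x) + (1 / 2 : ℝ) • (x - s x) := by module
    rw [hx]
    refine Submodule.add_mem_sup (Submodule.smul_mem _ _ (hs.add_apply_mem_span hD x)) ?_
    rw [s.mem_ker_add_id_iff, map_smul, map_sub, hs.apply_apply hD]
    module

end IsHalfTurn

theorem IsRotationGroup.exists_isHalfTurn {D : Subgroup (V ≃ₗ[ℝ] V)} (hD : IsRotationGroup D)
    {n e : V} (hne : LinearIndependent ℝ ![n, e]) : ∃ r, IsHalfTurn D n r := by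
  have hn : n ≠ 0 := hne.ne_zero 0
  obtain ⟨r, ⟨hrD, hrH, hrR⟩, -⟩ := hD n e n (-e) hne (by simpa)
  rw [r.image_halfPlane] at hrH
  rw [r.image_ray] at hrR
  obtain ⟨c, hc, hrn⟩ : r n ∈ Ray' n := hrR ▸ mem_ray_self _
  obtain ⟨a, b, hb, hre⟩ : r e ∈ HalfPlane n (-e) := hrH ▸ right_mem_halfPlane _ _
  have hc0 : c ≠ 0 := by
    rintro rfl
    exact hn (r.map_eq_zero_iff.1 (by simpa using hrn))
  have hb0 : b ≠ 0 := by
    rintro rfl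
    refine (LinearIndependent.pair_iff' hn).1 hne (a / c) (r.injective ?_)
    rw [map_smul, hrn, hre, smul_smul, div_mul_cancel₀ a hc0]
    module
  have hrrn : r (r n) = (c * c) • n := by rw [hrn, map_smul, hrn, smul_smul]
  have hrre : r (r e) = (a * c - b * a) • n + (b * b) • e := by
    rw [hre, map_add, map_smul, map_smul, map_neg, hrn, hre]
    module
  have hrr : r * r = 1 := hD.eq_one_of_halfPlane_eq (D.mul_mem hrD hrD) hne
    (by rw [LinearEquiv.mul_apply, LinearEquiv.mul_apply, hrrn, hrre,
      halfPlane_smul_add_smul n e (by positivity) (by positivity)])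
    (by rw [LinearEquiv.mul_apply, ← r.image_ray, hrR, r.image_ray, hrR])
  have hrr' (x : V) : r (r x) = x := LinearEquiv.congr_fun hrr x
  have hc1 : c = 1 := by
    have h : (c * c - 1) • n = 0 := by
      linear_combination (norm := module) hrrn.symm.trans (hrr' n)
    nlinarith [sub_eq_zero.1 ((smul_eq_zero.1 h).resolve_right hn)]
  have hb1 : b = 1 := by
    have h : (a * c - b * a) • n + (b * b - 1) • e = 0 := by
      linear_combination (norm := module) hrre.symm.trans (hrr' e)
    nlinarith [sub_eq_zero.1 ((LinearIndependent.pair_iff.1 hne _ _ h).2)]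
  refine ⟨r, hrD, by rw [hrn, hc1, one_smul], (-(a / 2)) • n + e,
    (LinearIndependent.pair_add_smul_right_iff _).2 hne, ?_⟩
  rw [map_add, map_smul, hrn, hre, hc1, hb1]
  module

end

theorem stmt6 {V : Type*} [AddCommGroup V] [Module ℝ V]
    (hdim : Module.finrank ℝ V = 3)
    (D : Subgroup (V ≃ₗ[ℝ] V)) (hD : IsRotationGroup D)
    (n : V) (hn : n ≠ 0) :
    (∃ E : Submodule ℝ V, Module.finrank ℝ E = 2 ∧
      ∀ u : V, u ∈ E ↔ Perp D u n) ∧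
    (∃! r : V ≃ₗ[ℝ] V, r ∈ D ∧ r n = n ∧ ∀ u : V, Perp D u n → r u = -u) := by
  obtain ⟨e, hne⟩ := exists_linearIndependent_pair_of_one_lt_finrank (R := ℝ) (by omega) hn
  obtain ⟨r, hr⟩ := hD.exists_isHalfTurn hne
  have : FiniteDimensional ℝ V := Module.finite_of_finrank_eq_succ hdim
  have hfinrank := Submodule.finrank_add_eq_of_isCompl (hr.isCompl_span_ker hD)
  rw [finrank_span_singleton hn, hdim] at hfinrank
  refine ⟨⟨LinearMap.ker (r.toLinearMap + LinearMap.id), by omega, fun u ↦ ?_⟩,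
    r, ⟨hr.mem, hr.apply_axis, fun u ↦ (hr.perp_iff hD).1⟩, ?_⟩
  · rw [r.mem_ker_add_id_iff, hr.perp_iff hD]
  · rintro s ⟨hs, hsn, hs_neg⟩
    obtain ⟨u, hu, hru⟩ := hr.exists_apply_eq_neg
    exact IsHalfTurn.unique hD ⟨hs, hsn, u, hu, hs_neg u ((hr.perp_iff hD).2 hru)⟩ hr
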